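/- Let X be a real Banach space and let (A_i) be an approximation scheme in X. Let (Y_j)_{j ∈ ℕ} be a countable collection of linear subspaces of X, each of which fails Shapiro's Theorem relative to (A_i). Then the linear span of ⋃_j Y_j fails Shapiro's Theorem relative to (A_i): there exist a nonincreasing sequence of nonnegative reals ε_n → 0 and a function C : span[⋃_j Y_j] → [0,∞) such that E(y, A_n) ≤ C(y) ε_n for all n and all y in the span. -/

import Mathlib

open Metric Filter Pointwise

/-- `(A, K)` is an approximation scheme on `X`: the sets `A n` form a strictly increasing
chain, `A n + A n ⊆ A (K n)` with `K n ≥ n`, each `A n` is closed under scalar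
multiplication, and `⋃ n, A n` is dense in `X`. -/
def IsApproximationScheme {X : Type*} [NormedAddCommGroup X] [NormedSpace ℝ X]
    (A : ℕ → Set X) (K : ℕ → ℕ) : Prop :=
  (∀ n, A n ⊂ A (n + 1)) ∧
  (∀ n, n ≤ K n ∧ A n + A n ⊆ A (K n)) ∧
  (∀ (n : ℕ) (c : ℝ), c • A n ⊆ A n) ∧
  Dense (⋃ n, A n)

/-- Admissible error sequences: nonnegative, nonincreasing, tending to `0`. -/
def NullSeq (ε : ℕ → ℝ) : Prop :=
  (∀ n, 0 ≤ ε n) ∧ Antitone ε ∧ Tendsto ε atTop (nhds 0)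

/-- The subspace `Y` of `X` fails Shapiro's Theorem relative to `(A n)`: there are a
nonincreasing null sequence `ε` and a nonnegative function `C` on `Y` such that
`E(y, A n) ≤ C y * ε n` for all `n` and all `y ∈ Y`. -/
def FailsShapiroFor {X : Type*} [NormedAddCommGroup X] (Y : Set X) (A : ℕ → Set X) : Prop :=
  ∃ ε : ℕ → ℝ, NullSeq ε ∧ ∃ C : X → ℝ, (∀ y ∈ Y, 0 ≤ C y) ∧
    ∀ y ∈ Y, ∀ n : ℕ, Metric.infDist y (A n) ≤ C y * ε n

/-!
A single null sequence `ε` dominates, up to constants, the rates `δⱼ` of all the `Yⱼ`: take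
`ε n = 2⁻ⁿ + ∑ⱼ 2⁻ʲ δⱼ n / (1 + δⱼ 0)`. Since `A n + A n ⊆ A (K n)`, the error is subadditive
up to one application of `K`, `E(x + y, A (K n)) ≤ E(x, A n) + E(y, A n)`, so every element of
the span satisfies `E(y, A (Kᵏ n)) = O(ε n)` for some `k` depending on `y`. Composing with a lower
inverse `gₖ` of `Kᵏ` gives `E(y, A m) = O(ε (gₖ m))`, and dominating the countably many null
sequences `ε ∘ gₖ` by one positive null sequence `η` once more yields a rate for the whole span.
-/

open Asymptotics

theorem NullSeq.comp_monotone {ε : ℕ → ℝ} (hε : NullSeq ε) {g : ℕ → ℕ} (hg : Monotone g)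
    (hg_top : Tendsto g atTop atTop) : NullSeq (ε ∘ g) :=
  ⟨fun n => hε.1 (g n), hε.2.1.comp_monotone hg, hε.2.2.comp hg_top⟩

theorem exists_nullSeq_forall_isBigO (δ : ℕ → ℕ → ℝ) (hδ : ∀ j, NullSeq (δ j)) :
    ∃ ε, NullSeq ε ∧ (∀ n, 0 < ε n) ∧ ∀ j, δ j =O[atTop] ε := by
  set w : ℕ → ℝ := fun j => (1 / 2) ^ j / (1 + δ j 0)
  have hw : ∀ j, 0 < w j := fun j => div_pos (by positivity) (by linarith [(hδ j).1 0])
  have hterm_nonneg : ∀ n j, 0 ≤ w j * δ j n := fun n j => mul_nonneg (hw j).le ((hδ j).1 n)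
  have hterm_le : ∀ n j, w j * δ j n ≤ (1 / 2) ^ j := by
    intro n j
    have hδn : δ j n ≤ 1 + δ j 0 := by linarith [(hδ j).2.1 (Nat.zero_le n)]
    calc w j * δ j n = (1 / 2) ^ j * (δ j n / (1 + δ j 0)) := by ring
      _ ≤ (1 / 2) ^ j * 1 := by
        gcongr
        exact div_le_one_of_le₀ hδn (by linarith [(hδ j).1 0])
      _ = (1 / 2) ^ j := mul_one _
  have hsum : ∀ n, Summable fun j => w j * δ j n := fun n =>
    summable_geometric_two.of_nonneg_of_le (hterm_nonneg n) (hterm_le n)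
  have hpos : ∀ n, 0 < (1 / 2 : ℝ) ^ n + ∑' j, w j * δ j n := fun n =>
    add_pos_of_pos_of_nonneg (by positivity) (tsum_nonneg (hterm_nonneg n))
  refine ⟨fun n => (1 / 2) ^ n + ∑' j, w j * δ j n, ⟨fun n => (hpos n).le, ?_, ?_⟩, hpos,
    fun j => ?_⟩
  · refine fun m n hmn =>
      add_le_add (pow_le_pow_of_le_one (a := (1 / 2 : ℝ)) (by norm_num) (by norm_num) hmn) ?_
    exact (hsum n).tsum_le_tsum
      (fun j => mul_le_mul_of_nonneg_left ((hδ j).2.1 hmn) (hw j).le) (hsum m)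
  · have htsum : Tendsto (fun n => ∑' j, w j * δ j n) atTop (nhds 0) := by
      simpa using tendsto_tsum_of_dominated_convergence summable_geometric_two
        (fun j => (hδ j).2.2.const_mul (w j))
        (Eventually.of_forall fun n j => by
          rw [Real.norm_of_nonneg (hterm_nonneg n j)]
          exact hterm_le n j)
    have hgeom : Tendsto (fun n => (1 / 2 : ℝ) ^ n) atTop (nhds 0) :=
      tendsto_pow_atTop_nhds_zero_of_lt_one (by norm_num) (by norm_num)
    simpa using hgeom.add htsum
  · refine IsBigO.of_bound (w j)⁻¹ (Eventually.of_forall fun n => ?_)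
    rw [Real.norm_of_nonneg ((hδ j).1 n), Real.norm_of_nonneg (hpos n).le]
    calc δ j n = (w j)⁻¹ * (w j * δ j n) := by field_simp [(hw j).ne']
      _ ≤ (w j)⁻¹ * ((1 / 2) ^ n + ∑' i, w i * δ i n) := by
        refine mul_le_mul_of_nonneg_left ?_ (inv_nonneg.2 (hw j).le)
        have hpow : (0 : ℝ) ≤ (1 / 2) ^ n := by positivity
        linarith [(hsum n).le_tsum j fun i _ => hterm_nonneg n i]

section FailsShapiro

variable {X : Type*} [NormedAddCommGroup X] {Y : Set X} {A : ℕ → Set X}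

theorem FailsShapiroFor.exists_isBigO (h : FailsShapiroFor Y A) :
    ∃ ε, NullSeq ε ∧ ∀ y ∈ Y, (fun n => infDist y (A n)) =O[atTop] ε := by
  obtain ⟨ε, hε, C, -, hC⟩ := h
  refine ⟨ε, hε, fun y hy => IsBigO.of_bound (C y) (Eventually.of_forall fun n => ?_)⟩
  rw [Real.norm_of_nonneg infDist_nonneg, Real.norm_of_nonneg (hε.1 n)]
  exact hC y hy n

theorem failsShapiroFor_of_isBigO {η : ℕ → ℝ} (hη : NullSeq η) (hη_pos : ∀ n, 0 < η n)
    (h : ∀ y ∈ Y, (fun n => infDist y (A n)) =O[atTop] η) : FailsShapiroFor Y A := by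
  have hbound : ∀ y ∈ Y, ∃ C > 0, ∀ n, infDist y (A n) ≤ C * η n := by
    intro y hy
    obtain ⟨C, hC, hb⟩ := bound_of_isBigO_cofinite (Nat.cofinite_eq_atTop ▸ h y hy)
    refine ⟨C, hC, fun n => ?_⟩
    simpa only [Real.norm_of_nonneg infDist_nonneg, Real.norm_of_nonneg (hη_pos n).le]
      using hb (hη_pos n).ne'
  choose! C hC_pos hC using hbound
  exact ⟨η, hη, C, fun y hy => (hC_pos y hy).le, hC⟩

end FailsShapiro

theorem infDist_add_le_of_add_subset {X : Type*} [SeminormedAddCommGroup X] {S T B : Set X}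
    (hS : S.Nonempty) (hT : T.Nonempty) (hB : S + T ⊆ B) (x y : X) :
    infDist (x + y) B ≤ infDist x S + infDist y T := by
  have hdist : ∀ a ∈ S, ∀ b ∈ T, infDist (x + y) B ≤ dist x a + dist y b := fun a ha b hb =>
    (infDist_le_dist_of_mem (hB (Set.add_mem_add ha hb))).trans (dist_add_add_le x y a b)
  have : infDist (x + y) B - infDist y T ≤ infDist x S := by
    refine (le_infDist hS).2 fun a ha => ?_
    have : infDist (x + y) B - dist x a ≤ infDist y T :=
      (le_infDist hT).2 fun b hb => by linarith [hdist a ha b hb]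
    linarith
  linarith

-- `0` when no `n ≤ m` has `φ n ≤ m`.
def lowerInv (φ : ℕ → ℕ) (m : ℕ) : ℕ :=
  Nat.findGreatest (fun n => φ n ≤ m) m

section LowerInv

variable {φ : ℕ → ℕ} {n m : ℕ}

theorem lowerInv_mono (φ : ℕ → ℕ) : Monotone (lowerInv φ) :=
  fun _ _ h => Nat.findGreatest_mono (fun _ hn => hn.trans h) h

theorem le_lowerInv (hnm : n ≤ m) (h : φ n ≤ m) : n ≤ lowerInv φ m :=
  Nat.le_findGreatest hnm h

theorem map_lowerInv_le (hnm : n ≤ m) (h : φ n ≤ m) : φ (lowerInv φ m) ≤ m :=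
  Nat.findGreatest_spec (P := fun n => φ n ≤ m) hnm h

theorem tendsto_lowerInv (hφ : id ≤ φ) : Tendsto (lowerInv φ) atTop atTop :=
  tendsto_atTop_atTop.2 fun N => ⟨φ N, fun _ hm => le_lowerInv ((hφ N).trans hm) hm⟩

end LowerInv

namespace IsApproximationScheme

variable {X : Type*} [NormedAddCommGroup X] [NormedSpace ℝ X] {A : ℕ → Set X} {K : ℕ → ℕ}

theorem monotone (hA : IsApproximationScheme A K) : Monotone A :=
  monotone_nat_of_le_succ fun n => (hA.1 n).subset

theorem nonempty_one (hA : IsApproximationScheme A K) : (A 1).Nonempty :=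
  (Set.exists_of_ssubset (hA.1 0)).imp fun _ h => h.1

theorem id_le (hA : IsApproximationScheme A K) : id ≤ K :=
  fun n => (hA.2.1 n).1

theorem add_subset (hA : IsApproximationScheme A K) (n : ℕ) : A n + A n ⊆ A (K n) :=
  (hA.2.1 n).2

end IsApproximationScheme

section Rates

variable {X : Type*} [SeminormedAddCommGroup X] {A : ℕ → Set X} {K φ : ℕ → ℕ} {ε : ℕ → ℝ}
  {x y : X} {k l : ℕ}

theorem infDist_le_of_one_le (hA : Monotone A) (hA₁ : (A 1).Nonempty) {n m : ℕ} (hn : 1 ≤ n)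
    (hnm : n ≤ m) : infDist x (A m) ≤ infDist x (A n) :=
  infDist_le_infDist_of_subset (hA hnm) (hA₁.mono (hA hn))

theorem isBigO_infDist_iterate_mono (hA : Monotone A) (hA₁ : (A 1).Nonempty) (hK : id ≤ K)
    (hkl : k ≤ l) (h : (fun n => infDist x (A (K^[k] n))) =O[atTop] ε) :
    (fun n => infDist x (A (K^[l] n))) =O[atTop] ε := by
  refine Eventually.trans_isBigO ?_ h
  filter_upwards [eventually_ge_atTop 1] with n hn
  rw [Real.norm_of_nonneg infDist_nonneg, Real.norm_of_nonneg infDist_nonneg]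
  exact infDist_le_of_one_le hA hA₁ (hn.trans (Function.id_le_iterate_of_id_le hK k n))
    (Function.monotone_iterate_of_id_le hK hkl n)

theorem isBigO_infDist_add_iterate_succ (hA : Monotone A) (hA₁ : (A 1).Nonempty) (hK : id ≤ K)
    (hadd : ∀ n, A n + A n ⊆ A (K n)) (hx : (fun n => infDist x (A (K^[k] n))) =O[atTop] ε)
    (hy : (fun n => infDist y (A (K^[k] n))) =O[atTop] ε) :
    (fun n => infDist (x + y) (A (K^[k + 1] n))) =O[atTop] ε := by
  refine Eventually.trans_isBigO ?_ (hx.add hy)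
  filter_upwards [eventually_ge_atTop 1] with n hn
  have hne : (A (K^[k] n)).Nonempty :=
    hA₁.mono (hA (hn.trans (Function.id_le_iterate_of_id_le hK k n)))
  rw [Real.norm_of_nonneg infDist_nonneg, Real.norm_of_nonneg (add_nonneg infDist_nonneg
    infDist_nonneg), Function.iterate_succ_apply']
  exact infDist_add_le_of_add_subset hne hne (hadd _) x y

theorem exists_isBigO_infDist_iterate_of_mem_iSup [Module ℝ X] (hA : Monotone A)
    (hA₁ : (A 1).Nonempty) (hK : id ≤ K) (hadd : ∀ n, A n + A n ⊆ A (K n))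
    {Y : ℕ → Submodule ℝ X} (hY : ∀ j, ∀ y ∈ Y j, (fun n => infDist y (A n)) =O[atTop] ε)
    (hy : y ∈ ⨆ j, Y j) : ∃ k, (fun n => infDist y (A (K^[k] n))) =O[atTop] ε := by
  induction hy using Submodule.iSup_induction' with
  | mem j y hy => exact ⟨0, hY j y hy⟩
  | zero => exact ⟨0, hY 0 0 (Y 0).zero_mem⟩
  | add x y _ _ hx hy =>
    obtain ⟨k, hk⟩ := hx
    obtain ⟨l, hl⟩ := hy
    exact ⟨max k l + 1, isBigO_infDist_add_iterate_succ hA hA₁ hK hadd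
      (isBigO_infDist_iterate_mono hA hA₁ hK (le_max_left k l) hk)
      (isBigO_infDist_iterate_mono hA hA₁ hK (le_max_right k l) hl)⟩

theorem isBigO_infDist_comp_lowerInv (hA : Monotone A) (hA₁ : (A 1).Nonempty) (hφ : id ≤ φ)
    (h : (fun n => infDist x (A (φ n))) =O[atTop] ε) :
    (fun m => infDist x (A m)) =O[atTop] (ε ∘ lowerInv φ) := by
  refine Eventually.trans_isBigO (g := fun m => infDist x (A (φ (lowerInv φ m)))) ?_
    (h.comp_tendsto (tendsto_lowerInv hφ))
  filter_upwards [eventually_ge_atTop (φ 1)] with m hm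
  rw [Real.norm_of_nonneg infDist_nonneg, Real.norm_of_nonneg infDist_nonneg]
  exact infDist_le_of_one_le hA hA₁ ((le_lowerInv ((hφ 1).trans hm) hm).trans (hφ _))
    (map_lowerInv_le ((hφ 1).trans hm) hm)

end Rates

theorem span_of_failing_fails_general
    {X : Type*} [NormedAddCommGroup X] [NormedSpace ℝ X]
    (A : ℕ → Set X) (K : ℕ → ℕ) (hA : IsApproximationScheme A K)
    (Y : ℕ → Submodule ℝ X)
    (hfail : ∀ j : ℕ, FailsShapiroFor (Y j : Set X) A) :
    FailsShapiroFor ((⨆ j : ℕ, Y j : Submodule ℝ X) : Set X) A := by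
  choose δ hδ hYδ using fun j => (hfail j).exists_isBigO
  obtain ⟨ε, hε, -, hδε⟩ := exists_nullSeq_forall_isBigO δ hδ
  have hK : ∀ k, id ≤ K^[k] := Function.id_le_iterate_of_id_le hA.id_le
  obtain ⟨η, hη, hη_pos, hεη⟩ := exists_nullSeq_forall_isBigO (fun k => ε ∘ lowerInv K^[k])
    fun k => hε.comp_monotone (lowerInv_mono _) (tendsto_lowerInv (hK k))
  refine failsShapiroFor_of_isBigO hη hη_pos fun y hy => ?_
  obtain ⟨k, hk⟩ := exists_isBigO_infDist_iterate_of_mem_iSup hA.monotone hA.nonempty_one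
    hA.id_le hA.add_subset (fun j y hy => (hYδ j y hy).trans (hδε j)) hy
  exact (isBigO_infDist_comp_lowerInv hA.monotone hA.nonempty_one (hK k) hk).trans (hεη k)

/-- If each member of a countable collection `(Y j)` of subspaces of `X` fails Shapiro's
Theorem relative to an approximation scheme `(A n)`, then the linear span of their union
also fails Shapiro's Theorem relative to `(A n)`. -/
theorem span_of_failing_fails
    {X : Type*} [NormedAddCommGroup X] [NormedSpace ℝ X] [CompleteSpace X]
    (A : ℕ → Set X) (K : ℕ → ℕ) (hA : IsApproximationScheme A K)
    (Y : ℕ → Submodule ℝ X)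
    (hfail : ∀ j : ℕ, FailsShapiroFor (Y j : Set X) A) :
    FailsShapiroFor ((⨆ j : ℕ, Y j : Submodule ℝ X) : Set X) A :=
  span_of_failing_fails_general A K hA Y hfail
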